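/- arXiv:2009.02842 — 5 statements merged into one kernel-verified Lean document; each statement's English description precedes it below -/
import Mathlib

section
/- If L is an even integral lattice with minimal norm m0, x' ∈ L is a minimal-norm representative of its class modulo the sublattice generated by vectors of norms m0 and m0+2, with (x',x') > m0+2, and x ∈ L has norm m0+2, then |(x,x')| ≤ m0/2 + 1. -/
open scoped RealInnerProductSpace

/- If `x'` is no longer than `x' + x` and `x' - x`, expanding both squares gives
`∓ 2 ⟪x, x'⟫ ≤ ⟪x, x⟫`. A minimal representative of a class modulo a sublattice is
no longer than its translates by the sublattice, and a vector of norm `m0 + 2` lies in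
the sublattice generated by such vectors. -/

theorem abs_real_inner_le_half_of_le_add_of_le_sub {E : Type*} [NormedAddCommGroup E]
    [InnerProductSpace ℝ E] {x x' : E} (hadd : ⟪x', x'⟫ ≤ ⟪x' + x, x' + x⟫)
    (hsub : ⟪x', x'⟫ ≤ ⟪x' - x, x' - x⟫) :
    |⟪x, x'⟫| ≤ ⟪x, x⟫ / 2 := by
  rw [real_inner_add_add_self] at hadd
  rw [real_inner_sub_sub_self] at hsub
  rw [real_inner_comm, abs_le]
  constructor <;> linarith

theorem norm_m0_add_two_inner_bound_general (n : ℕ)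
    (L : Submodule ℤ (EuclideanSpace ℝ (Fin n)))
    (m0 : ℝ)
    (x' : EuclideanSpace ℝ (Fin n)) (hx'L : x' ∈ L)
    (hx'min : ∀ y ∈ L,
      y - x' ∈ Submodule.span ℤ
        {v | v ∈ L ∧ (⟪v, v⟫ = m0 ∨ ⟪v, v⟫ = m0 + 2)} →
      ⟪x', x'⟫ ≤ ⟪y, y⟫)
    (x : EuclideanSpace ℝ (Fin n)) (hxL : x ∈ L) (hxm : ⟪x, x⟫ = m0 + 2) :
    |⟪x, x'⟫| ≤ m0 / 2 + 1 := by
  have hxS : x ∈ Submodule.span ℤ {v | v ∈ L ∧ (⟪v, v⟫ = m0 ∨ ⟪v, v⟫ = m0 + 2)} :=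
    Submodule.subset_span ⟨hxL, Or.inr hxm⟩
  have hadd := hx'min (x' + x) (L.add_mem hx'L hxL) (by rwa [add_sub_cancel_left])
  have hsub := hx'min (x' - x) (L.sub_mem hx'L hxL)
    (by rw [sub_sub_cancel_left]; exact neg_mem hxS)
  calc |⟪x, x'⟫| ≤ ⟪x, x⟫ / 2 := abs_real_inner_le_half_of_le_add_of_le_sub hadd hsub
    _ = m0 / 2 + 1 := by rw [hxm]; ring

/-- In an even integral lattice `L ⊂ ℝⁿ` with minimal norm `m0`,
if `x'` is a minimal-norm representative of its class modulo the sublattice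
generated by vectors of norms `m0` and `m0 + 2`, with `(x',x') > m0 + 2`, then
every `x ∈ L` of norm `m0 + 2` satisfies `|(x,x')| ≤ m0/2 + 1`. -/
theorem norm_m0_add_two_inner_bound (n : ℕ)
    (L : Submodule ℤ (EuclideanSpace ℝ (Fin n)))
    (hfull : Submodule.span ℝ (L : Set (EuclideanSpace ℝ (Fin n))) = ⊤)
    (hint : ∀ x ∈ L, ∀ y ∈ L, ∃ k : ℤ, ⟪x, y⟫ = (k : ℝ))
    (heven : ∀ x ∈ L, ∃ k : ℤ, ⟪x, x⟫ = 2 * (k : ℝ))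
    (m0 : ℝ)
    (hm0 : ∃ v ∈ L, v ≠ 0 ∧ ⟪v, v⟫ = m0)
    (hm0min : ∀ v ∈ L, v ≠ 0 → m0 ≤ ⟪v, v⟫)
    (x' : EuclideanSpace ℝ (Fin n)) (hx'L : x' ∈ L)
    (hx'min : ∀ y ∈ L,
      y - x' ∈ Submodule.span ℤ
        {v | v ∈ L ∧ (⟪v, v⟫ = m0 ∨ ⟪v, v⟫ = m0 + 2)} →
      ⟪x', x'⟫ ≤ ⟪y, y⟫)
    (hs : m0 + 2 < ⟪x', x'⟫)
    (x : EuclideanSpace ℝ (Fin n)) (hxL : x ∈ L) (hxm : ⟪x, x⟫ = m0 + 2) :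
    |⟪x, x'⟫| ≤ m0 / 2 + 1 :=
  norm_m0_add_two_inner_bound_general n L m0 x' hx'L hx'min x hxL hxm
end

section
/- The polynomial P(x) = (x,x')^4 - (3/14)(x,x')^2(x',x')(x,x) + (3/728)(x',x')^2(x,x)^2 on R^24 is harmonic (its Laplacian vanishes identically) for every fixed x' ∈ R^24. -/
open scoped RealInnerProductSpace

/-!
Write `P(x) = s⁴ + α s² q + β q²` with `s = ⟪u, x⟫`, `q = ‖x‖²`. Tracing the second derivative
over an orthonormal basis of an `n`-dimensional space gives
`ΔP = (12‖u‖² + (2n + 8)α) s² + (2α‖u‖² + (4n + 8)β) q`, which vanishes for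
`α = -6‖u‖² / (n + 4)` and `β = 3‖u‖⁴ / ((n + 2)(n + 4))`; for `n = 24` these are
`-(3/14)‖u‖²` and `(3/728)‖u‖⁴`.
-/

variable {E : Type*} [NormedAddCommGroup E] [InnerProductSpace ℝ E]

section

variable (u : E) (α β : ℝ)

def zonalQuartic (x : E) : ℝ :=
  ⟪u, x⟫ ^ 4 + α * ⟪u, x⟫ ^ 2 * ‖x‖ ^ 2 + β * (‖x‖ ^ 2) ^ 2

theorem fderiv_zonalQuartic_apply (x v : E) :
    fderiv ℝ (zonalQuartic u α β) x v =
      (4 * ⟪u, x⟫ ^ 3 + 2 * α * ⟪u, x⟫ * ‖x‖ ^ 2) * ⟪u, v⟫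
        + 2 * (α * ⟪u, x⟫ ^ 2 + 2 * β * ‖x‖ ^ 2) * ⟪x, v⟫ := by
  have hs : HasFDerivAt (⟪u, ·⟫) (innerSL ℝ u) x := (innerSL ℝ u).hasFDerivAt
  have hq : HasFDerivAt (‖·‖ ^ 2) (2 • innerSL ℝ x) x := (hasStrictFDerivAt_norm_sq x).hasFDerivAt
  have H : HasFDerivAt (zonalQuartic u α β) _ x :=
    ((hs.pow 4).add (((hs.pow 2).const_mul α).mul hq)).add ((hq.pow 2).const_mul β)
  rw [H.fderiv]
  simp only [Nat.add_one_sub_one, nsmul_eq_mul, Nat.cast_ofNat, pow_one, smul_eq_mul,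
    add_apply, smul_apply, innerSL_apply_apply]
  ring

theorem fderiv_fderiv_zonalQuartic_apply (x v : E) :
    fderiv ℝ (fun y => fderiv ℝ (zonalQuartic u α β) y v) x v =
      (12 * ⟪u, x⟫ ^ 2 + 2 * α * ‖x‖ ^ 2) * ⟪u, v⟫ ^ 2 + 8 * α * ⟪u, x⟫ * ⟪u, v⟫ * ⟪x, v⟫
        + 8 * β * ⟪x, v⟫ ^ 2 + 2 * (α * ⟪u, x⟫ ^ 2 + 2 * β * ‖x‖ ^ 2) * ‖v‖ ^ 2 := by
  simp_rw [fderiv_zonalQuartic_apply]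
  have hs : HasFDerivAt (⟪u, ·⟫) (innerSL ℝ u) x := (innerSL ℝ u).hasFDerivAt
  have hv : HasFDerivAt (⟪·, v⟫) (innerSL ℝ v) x :=
    (innerSL ℝ v).hasFDerivAt.congr_of_eventuallyEq (.of_forall fun y => real_inner_comm v y)
  have hq : HasFDerivAt (‖·‖ ^ 2) (2 • innerSL ℝ x) x := (hasStrictFDerivAt_norm_sq x).hasFDerivAt
  have H : HasFDerivAt (fun y => (4 * ⟪u, y⟫ ^ 3 + 2 * α * ⟪u, y⟫ * ‖y‖ ^ 2) * ⟪u, v⟫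
        + 2 * (α * ⟪u, y⟫ ^ 2 + 2 * β * ‖y‖ ^ 2) * ⟪y, v⟫) _ x :=
    ((((hs.pow 3).const_mul 4).add ((hs.const_mul (2 * α)).mul hq)).mul_const ⟪u, v⟫).add
      ((((hs.pow 2).const_mul α).add (hq.const_mul (2 * β))).const_mul 2 |>.mul hv)
  rw [H.fderiv]
  simp only [Nat.add_one_sub_one, nsmul_eq_mul, Nat.cast_ofNat, pow_one, smul_eq_mul, Pi.add_apply,
    add_apply, smul_apply, innerSL_apply_apply, real_inner_self_eq_norm_sq]
  ring

theorem sum_fderiv_fderiv_zonalQuartic {ι : Type*} [Fintype ι] (b : OrthonormalBasis ι ℝ E)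
    (x : E) :
    ∑ i, fderiv ℝ (fun y => fderiv ℝ (zonalQuartic u α β) y (b i)) x (b i) =
      (12 * ‖u‖ ^ 2 + (2 * Fintype.card ι + 8) * α) * ⟪u, x⟫ ^ 2
        + (2 * α * ‖u‖ ^ 2 + (4 * Fintype.card ι + 8) * β) * ‖x‖ ^ 2 := by
  have hinner (y z : E) : ∑ i, ⟪y, b i⟫ * ⟪z, b i⟫ = ⟪y, z⟫ := by
    simpa only [real_inner_comm z] using b.sum_inner_mul_inner y z
  have hsq (y : E) : ∑ i, ⟪y, b i⟫ ^ 2 = ‖y‖ ^ 2 := by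
    simpa only [sq, real_inner_self_eq_norm_sq] using hinner y y
  simp only [fderiv_fderiv_zonalQuartic_apply, b.orthonormal.1, Finset.sum_add_distrib,
    ← Finset.mul_sum, mul_assoc, hinner, hsq]
  simp only [one_pow, mul_one, Finset.sum_const, Finset.card_univ, nsmul_eq_mul]
  ring

end

theorem sum_fderiv_fderiv_zonalQuartic_eq_zero {ι : Type*} [Fintype ι]
    (b : OrthonormalBasis ι ℝ E) (u x : E) :
    ∑ i, fderiv ℝ (fun y => fderiv ℝ (zonalQuartic u (-6 * ‖u‖ ^ 2 / (Fintype.card ι + 4))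
        (3 * (‖u‖ ^ 2) ^ 2 / ((Fintype.card ι + 2) * (Fintype.card ι + 4)))) y (b i)) x (b i)
      = 0 := by
  rw [sum_fderiv_fderiv_zonalQuartic]
  field_simp
  ring

/-- `P(x) = (x,x')⁴ - (3/14)(x,x')²(x',x')(x,x) + (3/728)(x',x')²(x,x)²`
on `ℝ²⁴` is harmonic for every fixed `x'`. -/
theorem harmonic_deg4_dim24 (x' : EuclideanSpace ℝ (Fin 24)) :
    let P : EuclideanSpace ℝ (Fin 24) → ℝ := fun x =>
      ⟪x, x'⟫ ^ 4 - (3 / 14) * ⟪x, x'⟫ ^ 2 * ⟪x', x'⟫ * ⟪x, x⟫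
        + (3 / 728) * ⟪x', x'⟫ ^ 2 * ⟪x, x⟫ ^ 2
    ∀ x : EuclideanSpace ℝ (Fin 24),
      (∑ i : Fin 24,
        fderiv ℝ (fun y => fderiv ℝ P y (EuclideanSpace.single i 1)) x
          (EuclideanSpace.single i 1)) = 0 := by
  intro P x
  have hP : P = zonalQuartic x' (-6 * ‖x'‖ ^ 2 / (Fintype.card (Fin 24) + 4))
      (3 * (‖x'‖ ^ 2) ^ 2 / ((Fintype.card (Fin 24) + 2) * (Fintype.card (Fin 24) + 4))) := by
    funext y
    simp only [P, zonalQuartic, real_inner_self_eq_norm_sq, real_inner_comm x', Fintype.card_fin]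
    ring
  simp_rw [hP, ← EuclideanSpace.basisFun_apply]
  exact sum_fderiv_fderiv_zonalQuartic_eq_zero _ x' x
end

section
/- The polynomial P(x) = (x,x')^6 - (15/32)(x,x')^4(x',x')(x,x) + (3/64)(x,x')^2(x',x')^2(x,x)^2 - (1/1792)(x',x')^3(x,x)^3 on R^24 is harmonic for every fixed x' ∈ R^24. -/
/-!
Write `a = ⟪x, v⟫`, `b = ⟪x, x⟫`, `c = ⟪v, v⟫`. In dimension `n` the Laplacian of a monomial
`a ^ k * b ^ m` is `k (k - 1) c a ^ (k - 2) b ^ m + 2 m (n + 2 k + 2 m - 2) a ^ k b ^ (m - 1)`,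
as one sees by differentiating twice along an orthonormal basis and summing with Parseval.
For `P = a⁶ - (15/32) c a⁴ b + (3/64) c² a² b² - (1/1792) c³ b³` and `n = 24` the three resulting
coefficients `30 - 64 · 15/32`, `-12 · 15/32 + 120 · 3/64` and `2 · 3/64 - 168/1792` all vanish.
-/

open scoped RealInnerProductSpace
open InnerProductSpace Laplacian

theorem laplacian_eq_sum_fderiv_fderiv {E F ι : Type*} [NormedAddCommGroup E]
    [InnerProductSpace ℝ E] [FiniteDimensional ℝ E] [NormedAddCommGroup F] [NormedSpace ℝ F]
    [Fintype ι] (b : OrthonormalBasis ι ℝ E) {f : E → F} {x : E} (hf : ContDiffAt ℝ 2 f x) :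
    Δ f x = ∑ i, fderiv ℝ (fun y => fderiv ℝ f y (b i)) x (b i) := by
  have hdf : DifferentiableAt ℝ (fderiv ℝ f) x :=
    (hf.fderiv_right (m := 1) (by norm_num)).differentiableAt one_ne_zero
  simp [laplacian_eq_iteratedFDeriv_orthonormalBasis f b, iteratedFDeriv_two_apply,
    fderiv_clm_apply hdf (differentiableAt_const _)]

section

variable {E : Type*} [NormedAddCommGroup E] [InnerProductSpace ℝ E]

theorem hasFDerivAt_inner_const_right (v x : E) :
    HasFDerivAt (fun y : E => ⟪y, v⟫) (innerSL ℝ v) x := by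
  have h : (fun y : E => ⟪y, v⟫) = innerSL ℝ v := funext fun y => real_inner_comm v y
  exact h ▸ (innerSL ℝ v).hasFDerivAt

theorem hasFDerivAt_inner_self (x : E) : HasFDerivAt (fun y : E => ⟪y, y⟫) (2 • innerSL ℝ x) x := by
  have h : (fun y : E => ⟪y, y⟫) = fun y => ‖y‖ ^ 2 := funext real_inner_self_eq_norm_sq
  exact h ▸ (hasStrictFDerivAt_norm_sq x).hasFDerivAt

def innerMonomial (v : E) (k m : ℕ) (x : E) : ℝ := ⟪x, v⟫ ^ k * ⟪x, x⟫ ^ m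

@[fun_prop]
theorem contDiff_innerMonomial (v : E) (k m : ℕ) {n : WithTop ℕ∞} :
    ContDiff ℝ n (innerMonomial v k m) :=
  ((contDiff_id.inner ℝ contDiff_const).pow k).mul ((contDiff_id.inner ℝ contDiff_id).pow m)

theorem hasFDerivAt_innerMonomial (v : E) (k m : ℕ) (x : E) :
    HasFDerivAt (innerMonomial v k m)
      ((k * innerMonomial v (k - 1) m x) • innerSL ℝ v
        + (2 * m * innerMonomial v k (m - 1) x) • innerSL ℝ x) x := by
  refine (((hasFDerivAt_inner_const_right v x).pow k).mul
    ((hasFDerivAt_inner_self x).pow m)).congr_fderiv ?_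
  ext w
  simp only [innerMonomial, nsmul_eq_mul, add_apply, smul_apply, innerSL_apply_apply, smul_eq_mul]
  ring

theorem fderiv_innerMonomial_apply (v : E) (k m : ℕ) (y w : E) :
    fderiv ℝ (innerMonomial v k m) y w =
      k * ⟪v, w⟫ * innerMonomial v (k - 1) m y + 2 * m * ⟪y, w⟫ * innerMonomial v k (m - 1) y := by
  rw [(hasFDerivAt_innerMonomial v k m y).fderiv]
  simp only [add_apply, smul_apply, innerSL_apply_apply, smul_eq_mul]
  ring

theorem fderiv_fderiv_innerMonomial_apply (v : E) (k m : ℕ) (x w : E) :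
    fderiv ℝ (fun y => fderiv ℝ (innerMonomial v k m) y w) x w =
      k * (k - 1 : ℕ) * ⟪v, w⟫ ^ 2 * innerMonomial v (k - 2) m x
        + 4 * k * m * ⟪v, w⟫ * ⟪x, w⟫ * innerMonomial v (k - 1) (m - 1) x
        + 4 * m * (m - 1 : ℕ) * ⟪x, w⟫ ^ 2 * innerMonomial v k (m - 2) x
        + 2 * m * ⟪w, w⟫ * innerMonomial v k (m - 1) x := by
  have h := ((hasFDerivAt_innerMonomial v (k - 1) m x).const_mul (k * ⟪v, w⟫)).add
    (((hasFDerivAt_inner_const_right w x).mul (hasFDerivAt_innerMonomial v k (m - 1) x)).const_mul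
      (2 * m))
  have h' : HasFDerivAt (fun y => fderiv ℝ (innerMonomial v k m) y w) _ x :=
    h.congr_of_eventuallyEq (.of_forall fun y => by
      simp only [Pi.add_apply, Pi.mul_apply, fderiv_innerMonomial_apply]; ring)
  rw [h'.fderiv]
  simp only [add_apply, smul_apply, innerSL_apply_apply, smul_eq_mul, Nat.sub_sub]
  ring

/-- The truncated exponents `k - 2` and `m - 1` only occur with a vanishing coefficient. -/
theorem laplacian_innerMonomial [FiniteDimensional ℝ E] (v : E) (k m : ℕ) (x : E) :
    Δ (innerMonomial v k m) x =
      k * (k - 1) * ⟪v, v⟫ * innerMonomial v (k - 2) m x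
        + 2 * m * (Module.finrank ℝ E + 2 * k + 2 * m - 2) * innerMonomial v k (m - 1) x := by
  set b := stdOrthonormalBasis ℝ E
  have hsum (y z : E) : ∑ i, ⟪y, b i⟫ * ⟪z, b i⟫ = ⟪y, z⟫ := by
    simpa only [real_inner_comm z] using b.sum_inner_mul_inner y z
  calc Δ (innerMonomial v k m) x
      = ∑ i, (k * (k - 1 : ℕ) * innerMonomial v (k - 2) m x * (⟪v, b i⟫ * ⟪v, b i⟫)
          + 4 * k * m * innerMonomial v (k - 1) (m - 1) x * (⟪v, b i⟫ * ⟪x, b i⟫)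
          + 4 * m * (m - 1 : ℕ) * innerMonomial v k (m - 2) x * (⟪x, b i⟫ * ⟪x, b i⟫)
          + 2 * m * innerMonomial v k (m - 1) x * ⟪b i, b i⟫) := by
        rw [laplacian_eq_sum_fderiv_fderiv b (contDiff_innerMonomial v k m).contDiffAt]
        refine Finset.sum_congr rfl fun i _ => ?_
        rw [fderiv_fderiv_innerMonomial_apply]
        ring
    _ = k * (k - 1 : ℕ) * innerMonomial v (k - 2) m x * ⟪v, v⟫
          + 4 * k * m * innerMonomial v (k - 1) (m - 1) x * ⟪v, x⟫
          + 4 * m * (m - 1 : ℕ) * innerMonomial v k (m - 2) x * ⟪x, x⟫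
          + 2 * m * innerMonomial v k (m - 1) x * Module.finrank ℝ E := by
        simp only [Finset.sum_add_distrib, ← Finset.mul_sum, hsum, b.inner_eq_one, Finset.sum_const,
          Finset.card_univ, Fintype.card_fin, nsmul_eq_mul, mul_one]
        ring
    _ = _ := by
        rcases k with _ | k <;> rcases m with _ | _ | m <;>
          simp only [innerMonomial, pow_succ, pow_zero, Nat.cast_add, Nat.cast_one, Nat.cast_zero,
            add_tsub_cancel_right, Nat.reduceSubDiff, Nat.zero_sub, real_inner_comm x v] <;>
          ring

/-- The homogenised Gegenbauer polynomial `C₆^(11)`, where `11 = (24 - 2) / 2`. -/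
noncomputable def zonalSextic (v y : E) : ℝ :=
  ⟪y, v⟫ ^ 6 - (15 / 32) * ⟪y, v⟫ ^ 4 * ⟪v, v⟫ * ⟪y, y⟫
    + (3 / 64) * ⟪y, v⟫ ^ 2 * ⟪v, v⟫ ^ 2 * ⟪y, y⟫ ^ 2
    - (1 / 1792) * ⟪v, v⟫ ^ 3 * ⟪y, y⟫ ^ 3

theorem zonalSextic_eq (v : E) :
    zonalSextic v = innerMonomial v 6 0 - ((15 / 32) * ⟪v, v⟫) • innerMonomial v 4 1
      + ((3 / 64) * ⟪v, v⟫ ^ 2) • innerMonomial v 2 2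
      - ((1 / 1792) * ⟪v, v⟫ ^ 3) • innerMonomial v 0 3 := by
  funext y
  simp only [zonalSextic, innerMonomial, Pi.add_apply, Pi.sub_apply, Pi.smul_apply, smul_eq_mul]
  ring

theorem contDiff_zonalSextic (v : E) {n : WithTop ℕ∞} : ContDiff ℝ n (zonalSextic v) := by
  rw [zonalSextic_eq]
  simp only [Pi.sub_def, Pi.add_def, Pi.smul_def]
  fun_prop

theorem laplacian_zonalSextic [FiniteDimensional ℝ E] (hE : Module.finrank ℝ E = 24) (v x : E) :
    Δ (zonalSextic v) x = 0 := by
  rw [zonalSextic_eq, ContDiffAt.laplacian_sub, ContDiffAt.laplacian_add, ContDiffAt.laplacian_sub,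
    laplacian_smul, laplacian_smul, laplacian_smul]
  · simp only [laplacian_innerMonomial, hE, smul_eq_mul]
    norm_num
    ring
  all_goals (try simp only [Pi.sub_def, Pi.add_def, Pi.smul_def]); fun_prop

end

/-- the degree-6 polynomial on ℝ²⁴ is harmonic for every fixed x'. -/
theorem harmonic_deg6_dim24 (x' : EuclideanSpace ℝ (Fin 24)) :
    let P : EuclideanSpace ℝ (Fin 24) → ℝ := fun x =>
      ⟪x, x'⟫ ^ 6 - (15 / 32) * ⟪x, x'⟫ ^ 4 * ⟪x', x'⟫ * ⟪x, x⟫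
        + (3 / 64) * ⟪x, x'⟫ ^ 2 * ⟪x', x'⟫ ^ 2 * ⟪x, x⟫ ^ 2
        - (1 / 1792) * ⟪x', x'⟫ ^ 3 * ⟪x, x⟫ ^ 3
    ∀ x : EuclideanSpace ℝ (Fin 24),
      (∑ i : Fin 24,
        fderiv ℝ (fun y => fderiv ℝ P y (EuclideanSpace.single i 1)) x
          (EuclideanSpace.single i 1)) = 0 := by
  intro P x
  have h := laplacian_eq_sum_fderiv_fderiv (EuclideanSpace.basisFun (Fin 24) ℝ)
    ((contDiff_zonalSextic x').contDiffAt (x := x))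
  simp only [EuclideanSpace.basisFun_apply] at h
  exact h.symm.trans <| laplacian_zonalSextic finrank_euclideanSpace_fin x' x
end

section
/- Suppose s > 0 is real and N satisfies 1344s - 1008s² + 168s³ ≤ N ≤ (-258048 + 201600s - 44352s² + 4032s³)/(5s - 22), where 5s - 22 > 0. Then s ≤ 8. -/
/-! After clearing the positive denominator `5s - 22`, the two bounds on `N` are compatible exactly
when `(s - 8)(s - 2)(5s² - 26s + 96) ≤ 0`. The quadratic factor has negative discriminant and
`s > 22/5 > 2`, so this forces `s ≤ 8`. -/

lemma rank24_bound_gap_eq (s : ℝ) :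
    (-258048 + 201600 * s - 44352 * s ^ 2 + 4032 * s ^ 3)
        - (1344 * s - 1008 * s ^ 2 + 168 * s ^ 3) * (5 * s - 22)
      = -168 * ((s - 8) * ((s - 2) * (5 * s ^ 2 - 26 * s + 96))) := by
  ring

theorem rank24_s_le_eight_general (s N : ℝ) (hd : 0 < 5 * s - 22)
    (hlow : 1344 * s - 1008 * s ^ 2 + 168 * s ^ 3 ≤ N)
    (hhigh : N ≤ (-258048 + 201600 * s - 44352 * s ^ 2 + 4032 * s ^ 3) / (5 * s - 22)) :
    s ≤ 8 := by
  have hgap : (1344 * s - 1008 * s ^ 2 + 168 * s ^ 3) * (5 * s - 22)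
      ≤ -258048 + 201600 * s - 44352 * s ^ 2 + 4032 * s ^ 3 :=
    (le_div_iff₀ hd).1 (hlow.trans hhigh)
  have hprod : (s - 8) * ((s - 2) * (5 * s ^ 2 - 26 * s + 96)) ≤ 0 := by
    linarith [rank24_bound_gap_eq s]
  have hquad : 0 < 5 * s ^ 2 - 26 * s + 96 := by nlinarith [sq_nonneg (5 * s - 13)]
  have hcofactor : 0 < (s - 2) * (5 * s ^ 2 - 26 * s + 96) := mul_pos (by linarith) hquad
  linarith [nonpos_of_mul_nonpos_left hprod hcofactor]

/-- the rank-24 bound: if `s > 0` with `5s - 22 > 0` and some real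
`N` satisfies `1344s - 1008s² + 168s³ ≤ N ≤ (-258048 + 201600s - 44352s² + 4032s³)/(5s - 22)`,
then `s ≤ 8`. -/
theorem rank24_s_le_eight (s N : ℝ) (hs : 0 < s) (hd : 0 < 5 * s - 22)
    (hlow : 1344 * s - 1008 * s ^ 2 + 168 * s ^ 3 ≤ N)
    (hhigh : N ≤ (-258048 + 201600 * s - 44352 * s ^ 2 + 4032 * s ^ 3) / (5 * s - 22)) :
    s ≤ 8 :=
  rank24_s_le_eight_general s N hd hlow hhigh
end

section
/- In a 24-dimensional Euclidean space there is no root system (with all roots of equal length) consisting of exactly 3024 roots such that each irreducible component is of type A, D, or E with all roots of the same norm; more precisely, 3024 cannot be written as a sum of root-counts n_i(n_i+1) (type A_{n_i}), 2n_i(n_i−1) (type D_{n_i}), 72 (E_6), 126 (E_7), 240 (E_8) with total rank ∑ rank ≤ 24. -/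
/-! Every irreducible component has as many roots as its rank times its Coxeter number
(`n + 1` for `A_n`, `2n - 2` for `D_n`, and `12, 18, 30` for `E₆, E₇, E₈`). Within total rank
`R ≥ 16` the Coxeter number is at most `2R - 2`, attained by `D_R`, so there are at most
`2(R - 1)R` roots: for `R = 24` that is `1104 < 3024`. -/

open Finset

def IsADEComponent (r m : ℕ) : Prop :=
  (∃ n : ℕ, 1 ≤ n ∧ r = n ∧ m = n * (n + 1)) ∨
  (∃ n : ℕ, 4 ≤ n ∧ r = n ∧ m = 2 * n * (n - 1)) ∨
  (r = 6 ∧ m = 72) ∨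
  (r = 7 ∧ m = 126) ∨
  (r = 8 ∧ m = 240)

theorem IsADEComponent.le_mul_rank {r m R : ℕ} (h : IsADEComponent r m) (hR : 16 ≤ R)
    (hr : r ≤ R) : m ≤ 2 * (R - 1) * r := by
  rcases h with ⟨_, -, rfl, rfl⟩ | ⟨_, -, rfl, rfl⟩ | ⟨rfl, rfl⟩ | ⟨rfl, rfl⟩ |
    ⟨rfl, rfl⟩
  · calc r * (r + 1) = (r + 1) * r := mul_comm _ _
      _ ≤ 2 * (R - 1) * r := Nat.mul_le_mul_right r (by omega)
  · calc 2 * r * (r - 1) = 2 * (r - 1) * r := by ring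
      _ ≤ 2 * (R - 1) * r := Nat.mul_le_mul_right r (by omega)
  all_goals omega

theorem sum_roots_le_of_isADEComponent {ι : Type*} [Fintype ι] {rank roots : ι → ℕ} {R : ℕ}
    (h : ∀ i, IsADEComponent (rank i) (roots i)) (hR : 16 ≤ R) (hrank : ∑ i, rank i ≤ R) :
    ∑ i, roots i ≤ 2 * (R - 1) * R :=
  calc ∑ i, roots i
      ≤ ∑ i, 2 * (R - 1) * rank i :=
        sum_le_sum fun i _ => (h i).le_mul_rank hR <|
          (single_le_sum (fun j _ => Nat.zero_le (rank j)) (mem_univ i)).trans hrank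
    _ = 2 * (R - 1) * ∑ i, rank i := (mul_sum ..).symm
    _ ≤ 2 * (R - 1) * R := Nat.mul_le_mul_left _ hrank

/-- there is no simply-laced root system in dimension 24 with
exactly 3024 roots: 3024 cannot be written as a sum of root-counts of
irreducible ADE components (`A_n`: `n(n+1)` roots of rank `n`; `D_n`, `n ≥ 4`:
`2n(n-1)` roots of rank `n`; `E₆`: 72 roots of rank 6; `E₇`: 126 roots of rank
7; `E₈`: 240 roots of rank 8) with total rank at most 24. -/
theorem no_root_system_3024_roots_rank24 :
    ¬ ∃ (k : ℕ) (rank roots : Fin k → ℕ),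
      (∀ i,
        (∃ n : ℕ, 1 ≤ n ∧ rank i = n ∧ roots i = n * (n + 1)) ∨
        (∃ n : ℕ, 4 ≤ n ∧ rank i = n ∧ roots i = 2 * n * (n - 1)) ∨
        (rank i = 6 ∧ roots i = 72) ∨
        (rank i = 7 ∧ roots i = 126) ∨
        (rank i = 8 ∧ roots i = 240)) ∧
      (∑ i, rank i) ≤ 24 ∧ (∑ i, roots i) = 3024 := by
  rintro ⟨k, rank, roots, hADE, hrank, hroots⟩
  have hbound := sum_roots_le_of_isADEComponent hADE (by norm_num) hrank
  omega
end
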